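/- For k ≥ 0 and n ≥ k + 1, the n-th term of the Catalan transform of the k-shifted Catalan sequence (a_m = C_{m−k} for m ≥ k, a_m = 0 for m < k) equals the number of sequences (u_1, ..., u_{n−k}) with 1 ≤ u_i ≤ n satisfying condition (1); moreover b_n = 0 for n ≤ k−1 and b_k = 1. -/

import Mathlib

/-!
Let `condSeqs n c m` be the sequences `u : Fin m → ℕ` satisfying condition (1) with
`1 ≤ u i ≤ min n (c + i + 1)`; the sequences of the theorem are `condSeqs n n (n - k)`.
Classify those of length `m + 1` by their last entry `t + 1`. If `t ≤ m`, condition (1)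
against the last entry pushes the `t` entries before it under the staircase `i ↦ i + 1`,
which also decouples them from the first `m - t` entries: the fiber is
`condSeqs n c (m - t) × condSeqs n 0 t`. If `t > m`, the fiber is `condSeqs n (t - m) m`.

When the bound `n` never binds (`m + c ≤ n`) this recursion is solved by the ballot
numbers `gc m c = [x^m] C(x)^(c+1)`, `C` the Catalan series. When `c = n`, writing
`m = n - k`, it is the recursion obtained from the Catalan transform of the `k`-shifted
Catalan sequence by expanding `C_(j+1) = ∑ C_t C_(j-t)`.
-/
def gc (n k : ℕ) : ℚ := ((k : ℚ) + 1) / (2 * (n : ℚ) + (k : ℚ) + 1) * ((2 * n + k + 1).choose n : ℚ)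

def cat (n : ℕ) : ℚ := 1 / ((n : ℚ) + 1) * ((2 * n).choose n : ℚ)

def Cond {n : ℕ} (u : Fin n → ℕ) : Prop :=
  ∀ i j : Fin n, i < j →
    ¬(1 ≤ (u j : ℤ) - (((j : ℕ) : ℤ) - ((i : ℕ) : ℤ)) ∧
      (u j : ℤ) - (((j : ℕ) : ℤ) - ((i : ℕ) : ℤ)) ≤ (u i : ℤ) - 1)

def ct (a : ℕ → ℚ) (n : ℕ) : ℚ :=
  if n = 0 then a 0
  else ∑ j ∈ Finset.range (n + 1),
    (j : ℚ) / ((2 * n - j : ℕ) : ℚ) * ((2 * n - j).choose (n - j) : ℚ) * a j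

open Finset PowerSeries
open scoped Nat

lemma gc_eq_factorial (m c : ℕ) :
    gc m c = (c + 1) * (2 * m + c)! / (m ! * (m + c + 1)!) := by
  rw [gc, show 2 * m + c + 1 = m + (m + c + 1) by ring, Nat.cast_add_choose,
    show m + (m + c + 1) = (2 * m + c) + 1 by ring, Nat.factorial_succ]
  push_cast
  field_simp

lemma gc_zero_left (c : ℕ) : gc 0 c = 1 := by
  simp [gc]
  positivity

lemma cat_eq_catalan (m : ℕ) : cat m = catalan m := by
  rw [cat, ← Nat.centralBinom_eq_two_mul_choose, ← succ_mul_catalan_eq_centralBinom]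
  push_cast
  field_simp

lemma gc_zero_right (m : ℕ) : gc m 0 = cat m := by
  rw [gc_eq_factorial, cat, two_mul, Nat.cast_add_choose, Nat.add_zero, Nat.add_zero,
    Nat.factorial_succ]
  push_cast [Nat.cast_zero, zero_add]
  field_simp

lemma gc_one_right (m : ℕ) : gc m 1 = gc (m + 1) 0 := by
  rw [gc_eq_factorial, gc_eq_factorial, show 2 * (m + 1) + 0 = 2 * m + 1 + 1 by ring,
    show m + 1 + 0 + 1 = m + 1 + 1 by ring, Nat.factorial_succ (2 * m + 1), Nat.factorial_succ m]
  push_cast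
  field_simp
  ring

lemma gc_succ_succ (m c : ℕ) : gc (m + 1) (c + 1) = gc (m + 1) c + gc m (c + 2) := by
  rw [gc_eq_factorial, gc_eq_factorial, gc_eq_factorial,
    show 2 * (m + 1) + (c + 1) = 2 * m + c + 2 + 1 by ring,
    show 2 * (m + 1) + c = 2 * m + c + 2 by ring, show 2 * m + (c + 2) = 2 * m + c + 2 by ring,
    show m + 1 + (c + 1) + 1 = m + c + 2 + 1 by ring, show m + (c + 2) + 1 = m + c + 2 + 1 by ring,
    show m + 1 + c + 1 = m + c + 2 by ring, Nat.factorial_succ (2 * m + c + 2),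
    Nat.factorial_succ (m + c + 2), Nat.factorial_succ m]
  push_cast
  field_simp
  ring

noncomputable def catSeries : ℚ⟦X⟧ := PowerSeries.mk cat

lemma catSeries_eq_one_add_X_mul_sq : catSeries = 1 + X * catSeries ^ 2 := by
  have h := congrArg (PowerSeries.map (Nat.castRingHom ℚ)) catalanSeries_sq_mul_X_add_one
  have hmap : PowerSeries.map (Nat.castRingHom ℚ) catalanSeries = catSeries := by
    ext m
    simp [catSeries, catalanSeries, cat_eq_catalan]
  rw [map_add, map_mul, map_pow, map_X, map_one, hmap] at h
  linear_combination -h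

-- Both sides satisfy `g 0 = C`, `X * g 1 = g 0 - 1` and `X * g (c + 2) = g (c + 1) - g c`:
-- for `gc` these are Pascal-type identities, for powers of `C` they follow from `C = 1 + X C²`.
lemma mk_gc_eq_pow (c : ℕ) : PowerSeries.mk (gc · c) = catSeries ^ (c + 1) := by
  have X_mul_one : X * PowerSeries.mk (gc · 1) = PowerSeries.mk (gc · 0) - 1 := by
    ext (_ | m) <;> simp [coeff_succ_X_mul, gc_zero_left, gc_one_right]
  have X_mul_add_two : ∀ c, X * PowerSeries.mk (gc · (c + 2)) =
      PowerSeries.mk (gc · (c + 1)) - PowerSeries.mk (gc · c) := by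
    intro c
    ext (_ | m) <;> simp [coeff_succ_X_mul, gc_zero_left, gc_succ_succ]
  have base : PowerSeries.mk (gc · 0) = catSeries := by
    ext m
    simp [catSeries, gc_zero_right]
  suffices ∀ c, PowerSeries.mk (gc · c) = catSeries ^ (c + 1) ∧
      PowerSeries.mk (gc · (c + 1)) = catSeries ^ (c + 2) from (this c).1
  intro c
  induction c with
  | zero =>
    refine ⟨by rw [base, zero_add, pow_one], X_mul_cancel ?_⟩
    rw [X_mul_one, base]
    linear_combination catSeries_eq_one_add_X_mul_sq
  | succ c ih =>
    refine ⟨ih.2, X_mul_cancel ?_⟩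
    rw [X_mul_add_two, ih.1, ih.2]
    linear_combination catSeries ^ (c + 1) * catSeries_eq_one_add_X_mul_sq

lemma gc_succ_right_eq_sum (m c : ℕ) :
    gc m (c + 1) = ∑ t ∈ range (m + 1), gc (m - t) c * gc t 0 := by
  calc gc m (c + 1) = coeff m (PowerSeries.mk (gc · 0) * PowerSeries.mk (gc · c)) := by
        rw [mk_gc_eq_pow, mk_gc_eq_pow, ← pow_add, show 0 + 1 + (c + 1) = c + 1 + 1 by ring,
          ← mk_gc_eq_pow, coeff_mk]
    _ = _ := by
        rw [coeff_mul, Nat.sum_antidiagonal_eq_sum_range_succ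
          (fun i j => coeff i (PowerSeries.mk (gc · 0)) * coeff j (PowerSeries.mk (gc · c)))]
        simp only [coeff_mk, mul_comm]

lemma gc_succ_left_eq_sum (m c : ℕ) : gc (m + 1) c = ∑ d ∈ range (c + 1), gc m (d + 1) := by
  induction c with
  | zero => rw [sum_range_one, gc_one_right]
  | succ c ih => rw [sum_range_succ, ← ih, gc_succ_succ]

lemma cat_succ (q : ℕ) : cat (q + 1) = ∑ t ∈ range (q + 1), cat t * cat (q - t) := by
  simp only [← gc_zero_right, ← gc_one_right, gc_succ_right_eq_sum, mul_comm]

def ctCoeff (n j : ℕ) : ℚ :=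
  (j : ℚ) / ((2 * n - j : ℕ) : ℚ) * ((2 * n - j).choose (n - j) : ℚ)

lemma ct_of_ne_zero (a : ℕ → ℚ) {n : ℕ} (hn : n ≠ 0) :
    ct a n = ∑ j ∈ range (n + 1), ctCoeff n j * a j := by
  rw [ct, if_neg hn]
  rfl

lemma ctCoeff_add_succ (m c : ℕ) : ctCoeff (m + c + 1) (c + 1) = gc m c := by
  rw [ctCoeff, gc, show 2 * (m + c + 1) - (c + 1) = 2 * m + c + 1 by omega,
    show m + c + 1 - (c + 1) = m by omega]
  push_cast
  ring

lemma sum_gc_eq_ctCoeff (m k : ℕ) : ∑ d ∈ range k, gc m (d + 1) = ctCoeff (m + 1 + k) k := by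
  cases k with
  | zero => simp [ctCoeff]
  | succ c => rw [← gc_succ_left_eq_sum, ← ctCoeff_add_succ, add_assoc]

def shiftedCat (k m : ℕ) : ℚ := if m < k then 0 else cat (m - k)

lemma shiftedCat_eq_add_sum {k j N : ℕ} (hj : j ≤ k + N) :
    shiftedCat k j =
      (if j = k then 1 else 0) + ∑ t ∈ range N, cat t * shiftedCat (k + t + 1) j := by
  rcases lt_trichotomy j k with hjk | rfl | hjk
  · simp [shiftedCat, hjk, hjk.ne, show ∀ t, j < k + t + 1 by omega]
  · simp [shiftedCat, cat]
  · obtain ⟨q, rfl⟩ : ∃ q, j = k + q + 1 := ⟨j - k - 1, by omega⟩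
    have hq : range (q + 1) ⊆ range N := range_subset_range.mpr (by omega)
    rw [if_neg (by omega), zero_add, ← sum_subset hq]
    · rw [shiftedCat, if_neg (by omega), show k + q + 1 - k = q + 1 by omega, cat_succ]
      refine sum_congr rfl fun t ht => ?_
      rw [mem_range] at ht
      rw [shiftedCat, if_neg (by omega), show k + q + 1 - (k + t + 1) = q - t by omega]
    · intro t _ ht
      rw [mem_range] at ht
      simp [shiftedCat, show k + q + 1 < k + t + 1 by omega]

lemma ct_shiftedCat_eq_add_sum {k n : ℕ} (hk : k < n) :
    ct (shiftedCat k) n =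
      ctCoeff n k + ∑ t ∈ range (n - k), cat t * ct (shiftedCat (k + t + 1)) n := by
  have hn : n ≠ 0 := by omega
  simp only [ct_of_ne_zero _ hn, mul_sum]
  rw [sum_comm, sum_congr rfl fun j hj => by
    rw [shiftedCat_eq_add_sum (N := n - k) (by simp at hj; omega)]]
  simp only [mul_add, sum_add_distrib, mul_ite, mul_one, mul_zero, sum_ite_eq', mem_range,
    mul_sum]
  rw [if_pos (by omega)]
  congr 1
  exact sum_congr rfl fun j _ => sum_congr rfl fun t _ => by ring

lemma ct_shiftedCat_of_lt {k m : ℕ} (h : m < k) : ct (shiftedCat k) m = 0 := by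
  rw [ct]
  split_ifs with hm
  · simp [shiftedCat, hm ▸ h]
  · exact sum_eq_zero fun j hj => by simp [shiftedCat, show j < k by simp at hj; omega]

lemma ct_shiftedCat_self (k : ℕ) : ct (shiftedCat k) k = 1 := by
  rcases Nat.eq_zero_or_pos k with rfl | hk
  · simp [ct, shiftedCat, cat]
  rw [ct_of_ne_zero _ hk.ne', sum_eq_single_of_mem k (self_mem_range_succ k)]
  · simp [ctCoeff, shiftedCat, cat, show 2 * k - k = k by omega, hk.ne']
  · intro j hj hjk
    simp [shiftedCat, show j < k by simp at hj; omega]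

instance (m : ℕ) : DecidablePred (@Cond m) := fun u => by unfold Cond; infer_instance

lemma cond_iff {m : ℕ} (u : Fin m → ℕ) :
    Cond u ↔ ∀ i j : Fin m, i < j → u j + i ≤ j ∨ u i + j ≤ u j + i := by
  refine forall₂_congr fun i j => imp_congr_right fun _ => ?_
  omega

lemma cond_snoc {m : ℕ} (u : Fin m → ℕ) (x : ℕ) :
    Cond (Fin.snoc u x : Fin (m + 1) → ℕ) ↔
      Cond u ∧ ∀ i : Fin m, x + i ≤ m ∨ u i + m ≤ x + i := by
  simp [cond_iff, Fin.forall_fin_succ', Fin.castSucc_lt_last,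
    not_lt.mpr (Fin.castSucc_lt_last _).le, forall_and]

lemma cond_append {a b : ℕ} (v : Fin a → ℕ) (w : Fin b → ℕ) :
    Cond (Fin.append v w) ↔
      Cond v ∧ Cond w ∧
        ∀ (i : Fin a) (j : Fin b), w j + i ≤ a + j ∨ v i + (a + j) ≤ w j + i := by
  have left_lt_right (i : Fin a) (j : Fin b) : Fin.castAdd b i < Fin.natAdd a j := by
    simp only [Fin.lt_def, Fin.val_castAdd, Fin.val_natAdd]; omega
  have castAdd_lt_iff {i i' : Fin a} : Fin.castAdd b i < Fin.castAdd b i' ↔ i < i' := by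
    simp only [Fin.lt_def, Fin.val_castAdd]
  have shift (x y i j : ℕ) : (y + (a + i) ≤ a + j ∨ x + (a + j) ≤ y + (a + i)) ↔
      (y + i ≤ j ∨ x + j ≤ y + i) := by omega
  simp only [cond_iff, Fin.forall_fin_add, Fin.append_left, Fin.append_right, castAdd_lt_iff,
    Fin.natAdd_lt_natAdd_iff, left_lt_right, (left_lt_right _ _).not_gt, Fin.val_castAdd,
    Fin.val_natAdd, false_imp_iff, forall_const, implies_true, forall_and, shift]
  tauto

def condSeqs (n c m : ℕ) : Finset (Fin m → ℕ) :=
  {u ∈ Fintype.piFinset fun i : Fin m => Icc 1 (min n (c + i + 1)) | Cond u}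

lemma mem_condSeqs {n c m : ℕ} {u : Fin m → ℕ} :
    u ∈ condSeqs n c m ↔
      (∀ i : Fin m, 1 ≤ u i ∧ u i ≤ min n (c + i + 1)) ∧ Cond u := by
  simp [condSeqs]

lemma card_condSeqs_zero (n c : ℕ) : #(condSeqs n c 0) = 1 :=
  card_eq_one.mpr ⟨finZeroElim, eq_singleton_iff_unique_mem.mpr
    ⟨mem_condSeqs.mpr ⟨finZeroElim, fun i => i.elim0⟩, fun _ _ => Subsingleton.elim _ _⟩⟩

lemma card_filter_last_eq {α : Type*} [DecidableEq α] {m : ℕ}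
    {S : Finset (Fin (m + 1) → α)} {T : Finset (Fin m → α)} {x : α}
    (h : ∀ v, Fin.snoc v x ∈ S ↔ v ∈ T) :
    #{u ∈ S | u (Fin.last m) = x} = #T := by
  refine card_nbij' Fin.init (Fin.snoc · x) (fun u hu => ?_) (fun v hv => ?_) (fun u hu => ?_)
    (fun v _ => Fin.init_snoc _ _)
  · rw [coe_filter, Set.mem_ofPred_eq] at hu
    rw [mem_coe, ← h, ← hu.2, Fin.snoc_init_self]
    exact hu.1
  · simpa [h] using hv
  · rw [coe_filter, Set.mem_ofPred_eq] at hu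
    rw [← hu.2]
    exact Fin.snoc_init_self u

lemma card_filter_last_eq_mul {α : Type*} [DecidableEq α] {a b : ℕ}
    {S : Finset (Fin (a + b + 1) → α)} {T₁ : Finset (Fin a → α)}
    {T₂ : Finset (Fin b → α)} {x : α}
    (h : ∀ v w, Fin.snoc (Fin.append v w) x ∈ S ↔ v ∈ T₁ ∧ w ∈ T₂) :
    #{u ∈ S | u (Fin.last _) = x} = #T₁ * #T₂ := by
  have h' (v : Fin (a + b) → α) :
      Fin.snoc v x ∈ S ↔ v ∈ (T₁ ×ˢ T₂).map (Fin.appendEquiv a b).toEmbedding := by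
    rw [mem_map_equiv, mem_product, ← h]
    simp [Fin.append_castAdd_natAdd]
  rw [card_filter_last_eq h', card_map, card_product]

lemma snoc_mem_condSeqs_iff {n c m t : ℕ} (hmt : m < t) (htc : t ≤ c + m) (htn : t < n)
    (v : Fin m → ℕ) :
    Fin.snoc v (t + 1) ∈ condSeqs n c (m + 1) ↔ v ∈ condSeqs n (t - m) m := by
  simp only [mem_condSeqs, cond_snoc, Fin.forall_fin_succ', Fin.snoc_castSucc, Fin.snoc_last,
    Fin.val_castSucc, Fin.val_last]
  constructor
  · rintro ⟨⟨hcap, -⟩, hcond, hlast⟩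
    exact ⟨fun i => by have := hcap i; have := hlast i; omega, hcond⟩
  · rintro ⟨hcap, hcond⟩
    exact ⟨⟨fun i => by have := hcap i; omega, by omega⟩, hcond,
      fun i => by have := hcap i; omega⟩

lemma snoc_append_mem_condSeqs_iff {n c a t : ℕ} (htn : t < n) (v : Fin a → ℕ)
    (w : Fin t → ℕ) :
    Fin.snoc (Fin.append v w) (t + 1) ∈ condSeqs n c (a + t + 1) ↔
      v ∈ condSeqs n c a ∧ w ∈ condSeqs n 0 t := by
  simp only [mem_condSeqs, cond_snoc, cond_append, Fin.forall_fin_succ', Fin.forall_fin_add,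
    Fin.snoc_castSucc, Fin.snoc_last, Fin.append_left, Fin.append_right, Fin.val_castSucc,
    Fin.val_castAdd, Fin.val_natAdd, Fin.val_last]
  constructor
  · rintro ⟨⟨⟨hv, hw⟩, -⟩, ⟨hcv, hcw, -⟩, -, hlast⟩
    exact ⟨⟨hv, hcv⟩, fun j => by have := hw j; have := hlast j; omega, hcw⟩
  · rintro ⟨⟨hv, hcv⟩, hw, hcw⟩
    exact ⟨⟨⟨hv, fun j => by have := hw j; omega⟩, by omega⟩,
      ⟨hcv, hcw, fun i j => by have := hw j; have := i.isLt; omega⟩,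
      fun i => by have := i.isLt; omega, fun j => by have := hw j; omega⟩

lemma card_condSeqs_succ {n c m : ℕ} (hm : m < n) :
    #(condSeqs n c (m + 1)) =
      ∑ t ∈ range (m + 1), #(condSeqs n c (m - t)) * #(condSeqs n 0 t) +
        ∑ d ∈ range (min n (c + m + 1) - (m + 1)), #(condSeqs n (d + 1) m) := by
  have last_mem (u) (hu : u ∈ condSeqs n c (m + 1)) :
      1 ≤ u (Fin.last m) ∧ u (Fin.last m) ≤ min n (c + m + 1) := by
    simpa using (mem_condSeqs.mp hu).1 (Fin.last m)
  have fiber (t) : #{u ∈ condSeqs n c (m + 1) | u (Fin.last m) - 1 = t} =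
      #{u ∈ condSeqs n c (m + 1) | u (Fin.last m) = t + 1} := by
    congr 1
    exact filter_congr fun u hu => by have := last_mem u hu; omega
  set K := min n (c + m + 1) - (m + 1) with hK
  rw [card_eq_sum_card_fiberwise (f := fun u => u (Fin.last m) - 1) (t := range (m + 1 + K))
    fun u hu => by have := last_mem u hu; simp; omega, sum_range_add]
  simp only [fiber]
  congr 1
  · refine sum_congr rfl fun t ht => ?_
    obtain ⟨a, rfl⟩ : ∃ a, m = a + t := ⟨m - t, by simp at ht; omega⟩
    rw [Nat.add_sub_cancel]
    exact card_filter_last_eq_mul fun v w => snoc_append_mem_condSeqs_iff (by omega) v w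
  · refine sum_congr rfl fun d hd => ?_
    rw [mem_range] at hd
    rw [card_filter_last_eq fun v => snoc_mem_condSeqs_iff (by omega) (by omega) (by omega) v,
      show m + 1 + d - m = d + 1 by omega]

lemma card_condSeqs_of_add_le {n m c : ℕ} (h : m + c ≤ n) :
    (#(condSeqs n c m) : ℚ) = gc m c := by
  induction m using Nat.strong_induction_on generalizing c with
  | _ m ih =>
  cases m with
  | zero => simp [card_condSeqs_zero, gc_zero_left]
  | succ m =>
    rw [card_condSeqs_succ (by omega), min_eq_right (by omega),
      show c + m + 1 - (m + 1) = c by omega]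
    push_cast
    rw [gc_succ_left_eq_sum, sum_range_succ _ c, gc_succ_right_eq_sum, add_comm]
    congr 1
    · exact sum_congr rfl fun d hd => by
        rw [mem_range] at hd
        exact ih _ (by omega) (by omega)
    · exact sum_congr rfl fun t ht => by
        rw [mem_range] at ht
        rw [ih _ (by omega) (by omega), ih _ (by omega) (by omega)]

lemma card_condSeqs_eq_ct {n m k : ℕ} (h : n = m + k) :
    (#(condSeqs n n m) : ℚ) = ct (shiftedCat k) n := by
  induction m using Nat.strong_induction_on generalizing k with
  | _ m ih =>
  cases m with
  | zero => rw [card_condSeqs_zero, h, zero_add, ct_shiftedCat_self, Nat.cast_one]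
  | succ m =>
    rw [card_condSeqs_succ (by omega), min_eq_left (by omega), show n - (m + 1) = k by omega,
      ct_shiftedCat_eq_add_sum (by omega), show n - k = m + 1 by omega]
    push_cast
    rw [add_comm]
    congr 1
    · rw [sum_congr rfl fun d hd => card_condSeqs_of_add_le (by simp at hd; omega),
        sum_gc_eq_ctCoeff, h]
    · refine sum_congr rfl fun t ht => ?_
      rw [mem_range] at ht
      rw [ih (m - t) (by omega) (k := k + t + 1) (by omega), card_condSeqs_of_add_le (by omega),
        gc_zero_right, mul_comm]

theorem stmt17 (k : ℕ) :
    (∀ n : ℕ, k + 1 ≤ n →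
      ct (fun m => if m < k then 0 else cat (m - k)) n
        = ({u : Fin (n - k) → ℕ | (∀ i, 1 ≤ u i ∧ u i ≤ n) ∧ Cond u}.ncard : ℚ)) ∧
    (∀ m : ℕ, m + 1 ≤ k → ct (fun m => if m < k then 0 else cat (m - k)) m = 0) ∧
    ct (fun m => if m < k then 0 else cat (m - k)) k = 1 := by
  refine ⟨fun n hn => ?_, fun m hm => ct_shiftedCat_of_lt hm, ct_shiftedCat_self k⟩
  have hset :
      {u : Fin (n - k) → ℕ | (∀ i, 1 ≤ u i ∧ u i ≤ n) ∧ Cond u} =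
        condSeqs n n (n - k) := by
    ext u
    rw [Set.mem_ofPred_eq, mem_coe, mem_condSeqs]
    simp only [show ∀ i : ℕ, min n (n + i + 1) = n from fun i => by omega]
  rw [hset, Set.ncard_coe_finset, card_condSeqs_eq_ct (k := k) (by omega)]
  rfl
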